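/- There exists k ∈ {0,…,N−1} such that (k, h(k)) is admissible, i.e. such that h = h(k) satisfies 1/ψ_k ≤ h (vacuous when k = 0) and h < 1/ψ_{k+1}. -/
import Mathlib

open Finset

private def Sfun (N : ℕ) (Q : Fin N → ℝ) (Qtot : ℝ) (k : ℕ) : ℝ :=
  Qtot - ∑ j ∈ univ.filter (fun j : Fin N => (j : ℕ) < k), Q j

private def Dfun (N : ℕ) (ψ Q : Fin N → ℝ) (k : ℕ) : ℝ :=
  ∑ j ∈ univ.filter (fun j : Fin N => k ≤ (j : ℕ)), Q j * ψ j

private lemma filt_ge (N k : ℕ) (hk : k < N) :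
    (univ.filter (fun j : Fin N => k ≤ (j : ℕ)))
      = insert ⟨k, hk⟩ (univ.filter (fun j : Fin N => k + 1 ≤ (j : ℕ))) := by
  ext j
  simp [Fin.ext_iff]
  omega

private lemma filt_lt (N k : ℕ) (hk : k < N) :
    (univ.filter (fun j : Fin N => (j : ℕ) < k + 1))
      = insert ⟨k, hk⟩ (univ.filter (fun j : Fin N => (j : ℕ) < k)) := by
  ext j
  simp [Fin.ext_iff]
  omega

private lemma Drec (N : ℕ) (ψ Q : Fin N → ℝ) (k : ℕ) (hk : k < N) :
    Dfun N ψ Q k = Q ⟨k, hk⟩ * ψ ⟨k, hk⟩ + Dfun N ψ Q (k + 1) := by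
  unfold Dfun
  rw [filt_ge N k hk, Finset.sum_insert]
  simp

private lemma Srec (N : ℕ) (Q : Fin N → ℝ) (Qtot : ℝ) (k : ℕ) (hk : k < N) :
    Sfun N Q Qtot (k + 1) = Sfun N Q Qtot k - Q ⟨k, hk⟩ := by
  unfold Sfun
  rw [filt_lt N k hk, Finset.sum_insert]
  · ring
  · simp

private lemma Dpos (N : ℕ) (ψ Q : Fin N → ℝ) (hψ : ∀ i, 0 < ψ i)
    (hQpos : ∀ i, 0 < Q i) (k : ℕ) (hk : k < N) : 0 < Dfun N ψ Q k := by
  rw [Drec N ψ Q k hk]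
  have h1 : 0 < Q ⟨k, hk⟩ * ψ ⟨k, hk⟩ := mul_pos (hQpos _) (hψ _)
  have h2 : 0 ≤ Dfun N ψ Q (k + 1) := by
    apply Finset.sum_nonneg
    intro i _
    exact le_of_lt (mul_pos (hQpos _) (hψ _))
  linarith

/-- There exists k ∈ {0,…,N−1} such that (k, h(k)) is admissible. -/
theorem stmt_1 (N : ℕ) (hN : 1 ≤ N) (ψ Q : Fin N → ℝ)
    (hψ : ∀ i, 0 < ψ i) (hQpos : ∀ i, 0 < Q i)
    (Qtot : ℝ) (hQtot : 0 < Qtot)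
    (hsort : ∀ i j : Fin N, i ≤ j → ψ j ≤ ψ i)
    (hexcess : Qtot < ∑ i, Q i) :
    ∃ k : ℕ, ∃ hk : k < N,
      (0 < k → 1 / ψ ⟨k - 1, by omega⟩ ≤
        (Qtot - ∑ j ∈ univ.filter (fun j : Fin N => (j : ℕ) < k), Q j) /
          (∑ j ∈ univ.filter (fun j : Fin N => k ≤ (j : ℕ)), Q j * ψ j)) ∧
      (Qtot - ∑ j ∈ univ.filter (fun j : Fin N => (j : ℕ) < k), Q j) /
          (∑ j ∈ univ.filter (fun j : Fin N => k ≤ (j : ℕ)), Q j * ψ j) < 1 / ψ ⟨k, hk⟩ := by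
  -- predicate: h(k) < 1/ψ_k in multiplied form
  have hbase : ∃ k : ℕ, ∃ h : k < N, Sfun N Q Qtot k * ψ ⟨k, h⟩ < Dfun N ψ Q k := by
    refine ⟨N - 1, by omega, ?_⟩
    have hN1 : N - 1 < N := by omega
    -- universe sum splits
    have hsplit : (∑ i, Q i) =
        (∑ j ∈ univ.filter (fun j : Fin N => (j : ℕ) < N - 1), Q j)
          + ∑ j ∈ univ.filter (fun j : Fin N => N - 1 ≤ (j : ℕ)), Q j := by
      rw [← Finset.sum_filter_add_sum_filter_not univ (fun j : Fin N => (j : ℕ) < N - 1) Q]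
      have hfe : univ.filter (fun j : Fin N => ¬ (j : ℕ) < N - 1)
          = univ.filter (fun j : Fin N => N - 1 ≤ (j : ℕ)) := by
        ext j
        simp only [Finset.mem_filter, Finset.mem_univ, true_and, not_lt]
      rw [hfe]
    have htail : (∑ j ∈ univ.filter (fun j : Fin N => N - 1 ≤ (j : ℕ)), Q j)
        = Q ⟨N - 1, hN1⟩ := by
      have : (univ.filter (fun j : Fin N => N - 1 ≤ (j : ℕ))) = {⟨N - 1, hN1⟩} := by
        ext j; simp [Fin.ext_iff]; omega
      rw [this, Finset.sum_singleton]
    have hDtail : Dfun N ψ Q (N - 1) = Q ⟨N - 1, hN1⟩ * ψ ⟨N - 1, hN1⟩ := by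
      unfold Dfun
      have : (univ.filter (fun j : Fin N => N - 1 ≤ (j : ℕ))) = {⟨N - 1, hN1⟩} := by
        ext j; simp [Fin.ext_iff]; omega
      rw [this, Finset.sum_singleton]
    have hSlt : Sfun N Q Qtot (N - 1) < Q ⟨N - 1, hN1⟩ := by
      unfold Sfun
      rw [hsplit, htail] at hexcess
      linarith
    rw [hDtail]
    have := hψ ⟨N - 1, hN1⟩
    nlinarith
  classical
  set k := Nat.find hbase with hkdef
  obtain ⟨hkN, hklt⟩ := Nat.find_spec hbase
  have hkmin : ∀ m < k, ¬ ∃ h : m < N, Sfun N Q Qtot m * ψ ⟨m, h⟩ < Dfun N ψ Q m :=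
    fun m hm => Nat.find_min hbase hm
  have hDk : 0 < Dfun N ψ Q k := Dpos N ψ Q hψ hQpos k hkN
  refine ⟨k, hkN, ?_, ?_⟩
  · intro hk0
    have hk1 : k - 1 < N := by omega
    have hnot := hkmin (k - 1) (by omega)
    push_neg at hnot
    have hge : Dfun N ψ Q (k - 1) ≤ Sfun N Q Qtot (k - 1) * ψ ⟨k - 1, hk1⟩ := hnot hk1
    have hk1' : k - 1 + 1 = k := by omega
    have hD : Dfun N ψ Q k = Dfun N ψ Q (k - 1) - Q ⟨k - 1, hk1⟩ * ψ ⟨k - 1, hk1⟩ := by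
      have := Drec N ψ Q (k - 1) hk1
      rw [hk1'] at this
      linarith
    have hS : Sfun N Q Qtot k = Sfun N Q Qtot (k - 1) - Q ⟨k - 1, hk1⟩ := by
      have := Srec N Q Qtot (k - 1) hk1
      rw [hk1'] at this
      linarith
    have key : Dfun N ψ Q k ≤ Sfun N Q Qtot k * ψ ⟨k - 1, hk1⟩ := by
      rw [hD, hS]
      ring_nf
      nlinarith [hge]
    have hψ1 := hψ ⟨k - 1, hk1⟩
    show 1 / ψ ⟨k - 1, hk1⟩ ≤ Sfun N Q Qtot k / Dfun N ψ Q k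
    rw [div_le_div_iff₀ hψ1 hDk]
    linarith
  · show Sfun N Q Qtot k / Dfun N ψ Q k < 1 / ψ ⟨k, hkN⟩
    rw [div_lt_div_iff₀ hDk (hψ ⟨k, hkN⟩)]
    linarith
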